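/- If a sequence of polynomials (f_n)_{n≥1} over an integral domain satisfies both f_{m+n}(q) = f_m(q) + q^m f_n(q) and f_{mn}(q) = f_m(q)·f_n(q^m) for all positive integers m, n, then either f_n = 0 for all n, or f_n(q) = [n]_q for all n. -/

import Mathlib

/-! Additivity with `m = 1` forces `f n = f 1 * [n]_q`, and multiplicativity with `m = n = 1`
makes `f 1` idempotent, hence `0` or `1` in a domain. -/

noncomputable def qint (R : Type*) [CommRing R] (n : ℕ) : Polynomial R :=
  ∑ i ∈ Finset.range n, Polynomial.X ^ i

open Polynomial

theorem qint_one (R : Type*) [CommRing R] : qint R 1 = 1 := by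
  simp [qint]

theorem qint_one_add (R : Type*) [CommRing R] (n : ℕ) : qint R (1 + n) = 1 + X * qint R n := by
  rw [qint, qint, add_comm 1 n, geom_sum_succ, add_comm]

theorem eq_mul_qint_of_add_one {R : Type*} [CommRing R] (f : ℕ → R[X])
    (hadd : ∀ n : ℕ, 0 < n → f (1 + n) = f 1 + X * f n) :
    ∀ n : ℕ, 0 < n → f n = f 1 * qint R n := by
  intro n hn
  induction n, hn using Nat.le_induction with
  | base => rw [qint_one, mul_one]
  | succ k hk ih => rw [add_comm k 1, hadd k hk, ih, qint_one_add]; ring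

theorem quantum_uniqueness {R : Type*} [CommRing R] [IsDomain R]
    (f : ℕ → Polynomial R)
    (hadd : ∀ m n : ℕ, 0 < m → 0 < n → f (m + n) = f m + Polynomial.X ^ m * f n)
    (hmul : ∀ m n : ℕ, 0 < m → 0 < n → f (m * n) = f m * (f n).comp (Polynomial.X ^ m)) :
    (∀ n : ℕ, 0 < n → f n = 0) ∨ (∀ n : ℕ, 0 < n → f n = qint R n) := by
  have hf : ∀ n, 0 < n → f n = f 1 * qint R n :=
    eq_mul_qint_of_add_one f fun n hn => by simpa using hadd 1 n one_pos hn
  have hidem : IsIdempotentElem (f 1) := by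
    have h := hmul 1 1 one_pos one_pos
    rw [pow_one, comp_X, mul_one] at h
    exact h.symm
  rcases IsIdempotentElem.iff_eq_zero_or_one.mp hidem with h0 | h1
  · exact Or.inl fun n hn => by rw [hf n hn, h0, zero_mul]
  · exact Or.inr fun n hn => by rw [hf n hn, h1, one_mul]
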